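/- arXiv:1211.2301 — 2 statements merged into one kernel-verified Lean document; each statement's English description precedes it below -/
import Mathlib

section
/- Let e be a transitive relation on a set E. Then e is square-free if and only if Clop(e) has the interpolation property: for all clopen subsets x₀, x₁, y₀, y₁ of e such that xᵢ ⊆ yⱼ for all i, j ∈ {0,1}, there exists a clopen subset z of e such that xᵢ ⊆ z ⊆ yᵢ for each i ∈ {0,1}. -/
/-- A binary relation (as a set of pairs) is transitive. -/
def TransRel {E : Type*} (a : Set (E × E)) : Prop :=
  ∀ x y z : E, (x, y) ∈ a → (y, z) ∈ a → (x, z) ∈ a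

/-- The transitive closure of a set of pairs. -/
def tcl {E : Type*} (a : Set (E × E)) : Set (E × E) :=
  {p | Relation.TransGen (fun u v => (u, v) ∈ a) p.1 p.2}

/-- The interior of `a` relative to `e`. -/
def tint {E : Type*} (e a : Set (E × E)) : Set (E × E) :=
  e \ tcl (e \ a)

/-- `a` is a closed subset of `e`. -/
def IsClosedIn {E : Type*} (e a : Set (E × E)) : Prop :=
  a ⊆ e ∧ TransRel a

/-- `a` is an open subset of `e`. -/
def IsOpenIn {E : Type*} (e a : Set (E × E)) : Prop :=
  a ⊆ e ∧ TransRel (e \ a)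

/-- `a` is a clopen subset of `e`. -/
def IsClopenIn {E : Type*} (e a : Set (E × E)) : Prop :=
  a ⊆ e ∧ TransRel a ∧ TransRel (e \ a)

/-- `a` is a regular closed subset of `e`. -/
def RegClosed {E : Type*} (e a : Set (E × E)) : Prop :=
  a ⊆ e ∧ a = tcl (tint e a)

/-- The reflexive preordering `x ⊴ y` associated with `e`. -/
def rle {E : Type*} (e : Set (E × E)) (x y : E) : Prop :=
  (x, y) ∈ e ∨ x = y

/-- `x ≡ y`: `x ⊴ y` and `y ⊴ x`. -/
def eqv {E : Type*} (e : Set (E × E)) (x y : E) : Prop :=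
  rle e x y ∧ rle e y x

/-- `e` is square-free. -/
def SqFree {E : Type*} (e : Set (E × E)) : Prop :=
  ∀ a b x y : E, (a, b) ∈ e → rle e a x → rle e x b → rle e a y → rle e y b →
    rle e x y ∨ rle e y x

/-- The interval `[a,b] = {x | a ⊴ x ⊴ b}`. -/
def cce {E : Type*} (e : Set (E × E)) (a b : E) : Set E :=
  {x | rle e a x ∧ rle e x b}

/-- `(a,b,U) ∈ F(e)`. -/
def Ftriple {E : Type*} (e : Set (E × E)) (a b : E) (U : Set E) : Prop :=
  (a, b) ∈ e ∧ U ⊆ cce e a b ∧ (a ≠ b → a ∉ U ∧ b ∈ U)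

/-- The clopen set `⟨a,b,U⟩ = e ∩ (({a} ∪ Uᶜ) × ({b} ∪ U))`. -/
def pji {E : Type*} (e : Set (E × E)) (a b : E) (U : Set E) : Set (E × E) :=
  e ∩ ((({a} : Set E) ∪ (cce e a b \ U)) ×ˢ (({b} : Set E) ∪ U))

/-- The set `p₋` associated with `p = ⟨a,b,U⟩`: if `a ≠ b` it is
`p \ ([a] × [b])`, and if `a = b` it is `p \ {(a,a)}`. -/
def pminus {E : Type*} (e : Set (E × E)) (a b : E) (U : Set E) : Set (E × E) :=
  {z ∈ pji e a b U | ¬ ((a ≠ b ∧ eqv e z.1 a ∧ eqv e z.2 b) ∨ (a = b ∧ z = (a, a)))}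

/-! If `e` is square-free, the transitive closure of `x₀ ∪ x₁` interpolates: it is closed by
construction, and it is open because, along a chain `u → m → ⋯ → w` of `x₀ ∪ x₁`-steps, any `v`
strictly between `u` and `w` is comparable with `m`, so the openness of `x₀` and `x₁` can be applied
step by step.

Conversely, let `x, y` be incomparable in `[a, b]`. For all `s, m, t` the pairs of `e` from
`↑s \ ↑m` into `↑m ∩ ↓t` form a clopen set; taking `(s, m, t)` to be `(a, x, x)`, `(x, b, b)`,
`(y, x, b)` and `(a, y, y)` gives clopen sets containing `(a, x)`, `(x, b)`, `(y, b)` and `(a, y)`,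
the first two disjoint from the last two. An interpolant would then contain `(a, b)` but neither
`(a, y)` nor `(y, b)`, contradicting openness. -/

section

variable {E : Type*} {e : Set (E × E)}

lemma rle_trans (he : TransRel e) {x y z : E} (hxy : rle e x y) (hyz : rle e y z) :
    rle e x z := by
  rcases hxy with hxy | rfl
  · rcases hyz with hyz | rfl
    · exact Or.inl (he _ _ _ hxy hyz)
    · exact Or.inl hxy
  · exact hyz

lemma IsClopenIn.isOpenIn {a : Set (E × E)} (h : IsClopenIn e a) : IsOpenIn e a :=
  ⟨h.1, h.2.2⟩

lemma IsClopenIn.diff {a : Set (E × E)} (h : IsClopenIn e a) : IsClopenIn e (e \ a) := by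
  refine ⟨Set.sdiff_subset, h.2.2, ?_⟩
  rw [Set.sdiff_sdiff_cancel_left h.1]
  exact h.2.1

section TransitiveClosure

variable {s t : Set (E × E)}

lemma subset_tcl : s ⊆ tcl s := fun _ hp => Relation.TransGen.single hp

lemma transRel_tcl : TransRel (tcl s) := fun _ _ _ h₁ h₂ => h₁.trans h₂

lemma tcl_subset (hst : s ⊆ t) (ht : TransRel t) : tcl s ⊆ t := by
  rintro ⟨u, v⟩ (h : Relation.TransGen _ u v)
  induction h with
  | single h => exact hst h
  | tail _ h ih => exact ht _ _ _ ih (hst h)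

end TransitiveClosure

lemma mem_sUnion_or_mem_sUnion_of_isOpenIn {S : Set (Set (E × E))}
    (hS : ∀ s ∈ S, IsOpenIn e s) {u v w : E} (huw : (u, w) ∈ ⋃₀ S) (huv : (u, v) ∈ e)
    (hvw : (v, w) ∈ e) : (u, v) ∈ ⋃₀ S ∨ (v, w) ∈ ⋃₀ S := by
  obtain ⟨s, hs, huws⟩ := huw
  by_contra! h
  exact ((hS s hs).2 u v w ⟨huv, fun h' => h.1 ⟨s, hs, h'⟩⟩
    ⟨hvw, fun h' => h.2 ⟨s, hs, h'⟩⟩).2 huws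

theorem isOpenIn_tcl_sUnion (he : TransRel e) (hsq : SqFree e) {S : Set (Set (E × E))}
    (hS : ∀ s ∈ S, IsOpenIn e s) : IsOpenIn e (tcl (⋃₀ S)) := by
  have hce : tcl (⋃₀ S) ⊆ e := tcl_subset (Set.sUnion_subset fun s hs => (hS s hs).1) he
  refine ⟨hce, ?_⟩
  rintro u v w ⟨huv, huvc⟩ ⟨hvw, hvwc⟩
  refine ⟨he _ _ _ huv hvw, fun (huwc : Relation.TransGen _ u w) => ?_⟩
  induction huwc using Relation.TransGen.head_induction_on generalizing v with
  | single huw =>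
    rcases mem_sUnion_or_mem_sUnion_of_isOpenIn hS huw huv hvw with h | h
    exacts [huvc (subset_tcl h), hvwc (subset_tcl h)]
  | @head u m hum hmw ih =>
    have hmw' : (m, w) ∈ tcl (⋃₀ S) := hmw
    have hume : (u, m) ∈ e := hce (subset_tcl hum)
    rcases hsq u w v m (hce (transRel_tcl _ _ _ (subset_tcl hum) hmw')) (Or.inl huv)
      (Or.inl hvw) (Or.inl hume) (Or.inl (hce hmw')) with (hvm | rfl) | (hmv | rfl)
    · rcases mem_sUnion_or_mem_sUnion_of_isOpenIn hS hum huv hvm with h | h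
      exacts [huvc (subset_tcl h), hvwc (transRel_tcl _ _ _ (subset_tcl h) hmw')]
    · exact huvc (subset_tcl hum)
    · exact ih v hmv (fun h => huvc (transRel_tcl _ _ _ (subset_tcl hum) h)) hvw hvwc
    · exact huvc (subset_tcl hum)

def crossing (e : Set (E × E)) (s m t : E) : Set (E × E) :=
  e ∩ ({u | rle e s u ∧ ¬ rle e m u} ×ˢ {v | rle e m v ∧ rle e v t})

theorem isClopenIn_crossing (he : TransRel e) (s m t : E) : IsClopenIn e (crossing e s m t) := by
  refine ⟨Set.inter_subset_left, ?_, ?_⟩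
  · rintro u v w ⟨huv, hu, -⟩ ⟨hvw, -, hw⟩
    exact ⟨he _ _ _ huv hvw, hu, hw⟩
  · rintro u v w ⟨huv, huvc⟩ ⟨hvw, hvwc⟩
    refine ⟨he _ _ _ huv hvw, fun ⟨_, ⟨hsu, hmu⟩, hmw, hwt⟩ => ?_⟩
    by_cases hmv : rle e m v
    · exact huvc ⟨huv, ⟨hsu, hmu⟩, hmv, rle_trans he (Or.inl hvw) hwt⟩
    · exact hvwc ⟨hvw, ⟨rle_trans he hsu (Or.inl huv), hmv⟩, hmw, hwt⟩

def HasInterpolation (e : Set (E × E)) : Prop :=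
  ∀ x₀ x₁ y₀ y₁ : Set (E × E),
    IsClopenIn e x₀ → IsClopenIn e x₁ → IsClopenIn e y₀ → IsClopenIn e y₁ →
    x₀ ⊆ y₀ → x₀ ⊆ y₁ → x₁ ⊆ y₀ → x₁ ⊆ y₁ →
    ∃ z, IsClopenIn e z ∧ x₀ ⊆ z ∧ x₁ ⊆ z ∧ z ⊆ y₀ ∧ z ⊆ y₁

theorem hasInterpolation_of_sqFree (he : TransRel e) (hsq : SqFree e) : HasInterpolation e := by
  intro x₀ x₁ y₀ y₁ hx₀ hx₁ hy₀ hy₁ h₀₀ h₀₁ h₁₀ h₁₁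
  have hopen := isOpenIn_tcl_sUnion he hsq (S := {x₀, x₁}) (by
    rintro s (rfl | rfl)
    exacts [hx₀.isOpenIn, hx₁.isOpenIn])
  rw [Set.sUnion_pair] at hopen
  exact ⟨tcl (x₀ ∪ x₁), ⟨hopen.1, transRel_tcl, hopen.2⟩,
    Set.subset_union_left.trans subset_tcl, Set.subset_union_right.trans subset_tcl,
    tcl_subset (Set.union_subset h₀₀ h₁₀) hy₀.2.1, tcl_subset (Set.union_subset h₀₁ h₁₁) hy₁.2.1⟩

theorem sqFree_of_hasInterpolation (he : TransRel e) (hint : HasInterpolation e) : SqFree e := by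
  intro a b x y _ hax hxb hay hyb
  by_contra! hxy
  obtain ⟨hxy, hyx⟩ := hxy
  have hax' : (a, x) ∈ e := hax.resolve_right fun h => hxy (h ▸ hay)
  have hxb' : (x, b) ∈ e := hxb.resolve_right fun h => hyx (h ▸ hyb)
  have hay' : (a, y) ∈ e := hay.resolve_right fun h => hyx (h ▸ hax)
  have hyb' : (y, b) ∈ e := hyb.resolve_right fun h => hxy (h ▸ hxb)
  have h₀₀ : crossing e a x x ⊆ e \ crossing e y x b :=
    fun ⟨_, _⟩ ⟨huv, _, _, hvx⟩ => ⟨huv, fun ⟨_, ⟨hyu, _⟩, _⟩ =>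
      hyx (rle_trans he (rle_trans he hyu (Or.inl huv)) hvx)⟩
  have h₀₁ : crossing e a x x ⊆ e \ crossing e a y y :=
    fun _ ⟨hp, _, _, hvx⟩ => ⟨hp, fun ⟨_, _, hyv, _⟩ => hyx (rle_trans he hyv hvx)⟩
  have h₁₀ : crossing e x b b ⊆ e \ crossing e y x b :=
    fun _ ⟨hp, ⟨hxu, _⟩, _⟩ => ⟨hp, fun ⟨_, ⟨_, hxu'⟩, _⟩ => hxu' hxu⟩
  have h₁₁ : crossing e x b b ⊆ e \ crossing e a y y :=
    fun _ ⟨hp, _, hbv, _⟩ => ⟨hp, fun ⟨_, _, _, hvy⟩ =>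
      hxy (rle_trans he hxb (rle_trans he hbv hvy))⟩
  obtain ⟨z, hz, hxz₀, hxz₁, hzy₀, hzy₁⟩ := hint _ _ _ _ (isClopenIn_crossing he a x x)
    (isClopenIn_crossing he x b b) (isClopenIn_crossing he y x b).diff
    (isClopenIn_crossing he a y y).diff h₀₀ h₀₁ h₁₀ h₁₁
  have habz : (a, b) ∈ z := hz.2.1 a x b
    (hxz₀ ⟨hax', ⟨Or.inr rfl, fun h => hxy (rle_trans he h hay)⟩, Or.inr rfl, Or.inr rfl⟩)
    (hxz₁ ⟨hxb', ⟨Or.inr rfl, fun h => hyx (rle_trans he hyb h)⟩, Or.inr rfl, Or.inr rfl⟩)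
  have hayz : (a, y) ∉ z := fun h =>
    (hzy₁ h).2 ⟨hay', ⟨Or.inr rfl, fun h => hyx (rle_trans he h hax)⟩, Or.inr rfl, Or.inr rfl⟩
  have hybz : (y, b) ∉ z := fun h => (hzy₀ h).2 ⟨hyb', ⟨Or.inr rfl, hxy⟩, hxb, Or.inr rfl⟩
  exact (hz.2.2 a y b ⟨hay', hayz⟩ ⟨hyb', hybz⟩).2 habz

end

/-- `e` is square-free iff `Clop(e)` has the interpolation property. -/
theorem squareFree_iff_interpolation {E : Type*} (e : Set (E × E)) (he : TransRel e) :
    SqFree e ↔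
      ∀ x₀ x₁ y₀ y₁ : Set (E × E),
        IsClopenIn e x₀ → IsClopenIn e x₁ → IsClopenIn e y₀ → IsClopenIn e y₁ →
        x₀ ⊆ y₀ → x₀ ⊆ y₁ → x₁ ⊆ y₀ → x₁ ⊆ y₁ →
        ∃ z, IsClopenIn e z ∧ x₀ ⊆ z ∧ x₁ ⊆ z ∧ z ⊆ y₀ ∧ z ⊆ y₁ :=
  ⟨hasInterpolation_of_sqFree he, sqFree_of_hasInterpolation he⟩
end

section
/- Let e be a transitive relation on a set E. A regular closed subset p of e is a completely join-irreducible element of Reg(e) — that is, there exists a regular closed set p' ⊊ p such that every regular closed x ⊊ p satisfies x ⊆ p' — if and only if p = ⟨a,b,U⟩ for some triple (a,b,U) ∈ F(e). -/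
/-!
The sets `⟨a,b,U⟩` are clopen, and they form a base of the open sets: if `(a,b)` lies in an
open `o`, then `(a,b) ∈ ⟨a,b,U⟩ ⊆ o` for `U = {b} ∪ {t ∈ [a,b] | t ≠ a, (a,t) ∈ o}`, because
`e \ o` is transitive. So if a regular closed `p` is not of the form `⟨a,b,U⟩`, every pair of
`int p` lies in some clopen `⟨a,b,U⟩ ⊊ p`, and any `p'` containing all of these contains
`cl (int p) = p`.

Conversely, for `p = ⟨a,b,U⟩` the candidate is `p' = cl (int p₋)`; it misses `(a,b)`, since
`(a,b) ∉ cl p₋`. If a regular closed `x ⊊ p` is not below `p'`, then `int x` contains a pair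
`(c,d) ∉ p₋`, i.e. `c ≡ a` and `d ≡ b`. No point is both a source and a target of `p` (unless
`a = b`), so for `(s,t) ∈ p` the pairs `(c,s)` and `(t,d)` avoid `int x`; a chain of `e \ x`
from `s` to `t` would then extend to one from `c` to `d`. Hence `p ⊆ int x`, contradicting
`x ⊊ p`.
-/

section

variable {E : Type*} {e : Set (E × E)}

section Closure

variable {a b : Set (E × E)}

lemma subset_tcl_s3 (a : Set (E × E)) : a ⊆ tcl a :=
  fun _ hz => Relation.TransGen.single hz

lemma tcl_mono (hab : a ⊆ b) : tcl a ⊆ tcl b :=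
  fun _ hz => Relation.TransGen.mono (fun _ _ h => hab h) _ _ hz

lemma transRel_tcl_s3 (a : Set (E × E)) : TransRel (tcl a) :=
  fun _ _ _ h₁ h₂ => Relation.TransGen.trans h₁ h₂

lemma tcl_subset_of_transRel (hab : a ⊆ b) (hb : TransRel b) : tcl a ⊆ b := by
  rintro ⟨x, y⟩ (h : Relation.TransGen _ x y)
  induction h with
  | single h => exact hab h
  | tail _ h ih => exact hb _ _ _ ih (hab h)

lemma tcl_eq_self (ha : TransRel a) : tcl a = a :=
  (tcl_subset_of_transRel subset_rfl ha).antisymm (subset_tcl_s3 a)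

end Closure

section Interior

variable {a u v x y : Set (E × E)}

lemma tint_subset (a : Set (E × E)) : tint e a ⊆ a :=
  fun _ hz => by_contra fun hza => hz.2 (subset_tcl_s3 _ ⟨hz.1, hza⟩)

lemma diff_tint (he : TransRel e) (a : Set (E × E)) : e \ tint e a = tcl (e \ a) :=
  Set.sdiff_sdiff_cancel_left (tcl_subset_of_transRel Set.sdiff_subset he)

lemma isOpenIn_tint (he : TransRel e) (a : Set (E × E)) : IsOpenIn e (tint e a) :=
  ⟨Set.sdiff_subset, diff_tint he a ▸ transRel_tcl_s3 _⟩

lemma IsOpenIn.subset_tint (hu : IsOpenIn e u) (huv : u ⊆ v) : u ⊆ tint e v :=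
  fun _ hz => ⟨hu.1 hz, fun hc =>
    (tcl_subset_of_transRel (Set.sdiff_subset_sdiff_right huv) hu.2 hc).2 hz⟩

lemma regClosed_tcl_tint (he : TransRel e) (a : Set (E × E)) : RegClosed e (tcl (tint e a)) :=
  ⟨tcl_subset_of_transRel Set.sdiff_subset he,
    (tcl_mono ((isOpenIn_tint he a).subset_tint (subset_tcl_s3 _))).antisymm
      (tcl_subset_of_transRel (tint_subset _) (transRel_tcl_s3 _))⟩

lemma IsClopenIn.regClosed (ha : IsClopenIn e a) : RegClosed e a := by
  obtain ⟨hae, hcl, hop⟩ := ha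
  have htint : tint e a = a := by rw [tint, tcl_eq_self hop, Set.sdiff_sdiff_cancel_left hae]
  exact ⟨hae, by rw [htint, tcl_eq_self hcl]⟩

lemma RegClosed.transRel (hx : RegClosed e x) : TransRel x :=
  hx.2 ▸ transRel_tcl_s3 _

lemma RegClosed.subset_of_tint_subset (hx : RegClosed e x) (hy : TransRel y)
    (h : tint e x ⊆ y) : x ⊆ y :=
  hx.2 ▸ tcl_subset_of_transRel h hy

end Interior

section Preorder

variable {x y z : E}

lemma rle_refl (x : E) : rle e x x := Or.inr rfl

lemma rle.mem_of_ne (h : rle e x y) (hne : x ≠ y) : (x, y) ∈ e :=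
  h.resolve_right hne

lemma mem_of_rle_of_mem (he : TransRel e) (h : rle e x y) (h' : (y, z) ∈ e) : (x, z) ∈ e := by
  rcases h with h | rfl
  exacts [he _ _ _ h h', h']

lemma mem_of_mem_of_rle (he : TransRel e) (h : (x, y) ∈ e) (h' : rle e y z) : (x, z) ∈ e := by
  rcases h' with h' | rfl
  exacts [he _ _ _ h h', h]

lemma rle.trans (he : TransRel e) (h : rle e x y) (h' : rle e y z) : rle e x z := by
  rcases h' with h' | rfl
  exacts [Or.inl (mem_of_rle_of_mem he h h'), h]

end Preorder

section Pji

variable {a b s t : E} {U : Set E}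

lemma mem_pji :
    (s, t) ∈ pji e a b U ↔ (s, t) ∈ e ∧ (s = a ∨ s ∈ cce e a b \ U) ∧ (t = b ∨ t ∈ U) :=
  Iff.rfl

lemma mem_pji_self (hab : (a, b) ∈ e) : (a, b) ∈ pji e a b U :=
  ⟨hab, Or.inl rfl, Or.inl rfl⟩

lemma rle_of_source (hs : s = a ∨ s ∈ cce e a b \ U) : rle e a s := by
  rcases hs with rfl | hs
  exacts [rle_refl s, hs.1.1]

lemma rle_of_target (hU : U ⊆ cce e a b) (ht : t = b ∨ t ∈ U) : rle e t b := by
  rcases ht with rfl | ht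
  exacts [rle_refl t, (hU ht).2]

lemma Ftriple.eq_of_source_of_target (hF : Ftriple e a b U) (hs : s = a ∨ s ∈ cce e a b \ U)
    (ht : s = b ∨ s ∈ U) : s = a ∧ s = b := by
  by_cases hab : a = b
  · subst hab
    rcases hs with rfl | ⟨-, hsU⟩
    · exact ⟨rfl, rfl⟩
    · exact ht.elim (fun h => ⟨h, h⟩) (absurd · hsU)
  · obtain ⟨haU, hbU⟩ := hF.2.2 hab
    rcases hs with rfl | ⟨-, hsU⟩ <;> rcases ht with rfl | ht
    exacts [⟨rfl, rfl⟩, absurd ht haU, absurd hbU hsU, absurd ht hsU]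

lemma Ftriple.isClopenIn_pji (he : TransRel e) (hF : Ftriple e a b U) :
    IsClopenIn e (pji e a b U) := by
  refine ⟨Set.inter_subset_left, fun x y z hxy hyz => ?_, fun x y z hxy hyz => ?_⟩
  · exact ⟨he _ _ _ hxy.1 hyz.1, hxy.2.1, hyz.2.2⟩
  · refine ⟨he _ _ _ hxy.1 hyz.1, fun hxz => ?_⟩
    obtain ⟨-, hx, hz⟩ := mem_pji.1 hxz
    by_cases hyU : y ∈ U
    · exact hxy.2 ⟨hxy.1, hx, Or.inr hyU⟩
    · have hay : rle e a y := Or.inl (mem_of_rle_of_mem he (rle_of_source hx) hxy.1)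
      have hyb : rle e y b := Or.inl (mem_of_mem_of_rle he hyz.1 (rle_of_target hF.2.1 hz))
      exact hyz.2 ⟨hyz.1, Or.inr ⟨⟨hay, hyb⟩, hyU⟩, hz⟩

lemma exists_pji_subset_of_mem {o : Set (E × E)} (ho : IsOpenIn e o) (hab : (a, b) ∈ o) :
    ∃ U, Ftriple e a b U ∧ pji e a b U ⊆ o := by
  set U : Set E := insert b {t | t ∈ cce e a b ∧ t ≠ a ∧ (a, t) ∈ o}
  have habe : (a, b) ∈ e := ho.1 hab
  have hU : U ⊆ cce e a b := by
    rintro t (rfl | ht)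
    exacts [⟨Or.inl habe, rle_refl t⟩, ht.1]
  refine ⟨U, ⟨habe, hU, fun hne => ⟨?_, Or.inl rfl⟩⟩, ?_⟩
  · rintro (h | ⟨-, h, -⟩)
    exacts [hne h, h rfl]
  rintro ⟨s, t⟩ ⟨hst, hs, ht⟩
  by_contra hsto
  have hat : (a, t) ∈ o := by
    rcases ht with rfl | rfl | ⟨-, -, hat⟩
    exacts [hab, hab, hat]
  have has : s = a ∨ (a, s) ∈ e \ o := by
    refine or_iff_not_imp_left.2 fun hsa => ?_
    rcases hs with hsa' | ⟨hs, hsU⟩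
    · exact absurd hsa' hsa
    · exact ⟨hs.1.mem_of_ne (Ne.symm hsa), fun haso => hsU (Or.inr ⟨hs, hsa, haso⟩)⟩
  rcases has with rfl | has
  · exact hsto hat
  · exact (ho.2 _ _ _ has ⟨hst, hsto⟩).2 hat

lemma notMem_tcl_pminus (hF : Ftriple e a b U) : (a, b) ∉ tcl (pminus e a b U) := by
  intro h
  obtain ⟨y, hay, hyb⟩ := Relation.TransGen.tail'_iff.1 h
  have hya : y = a := by
    rcases (Relation.ReflTransGen.cases_tail_iff _ _ _).1 hay with rfl | ⟨_, -, hy⟩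
    · rfl
    · exact (hF.eq_of_source_of_target hyb.1.2.1 hy.1.2.2).1
  subst hya
  by_cases hab : y = b
  · exact hyb.2 (Or.inr ⟨hab, hab ▸ rfl⟩)
  · exact hyb.2 (Or.inl ⟨hab, ⟨rle_refl y, rle_refl y⟩, ⟨rle_refl b, rle_refl b⟩⟩)

lemma rle_ends_of_notMem_pminus {c d : E} (hcd : (c, d) ∈ pji e a b U)
    (hcdm : (c, d) ∉ pminus e a b U) :
    rle e c a ∧ rle e b d ∧ (a = b → c = a ∧ d = b) := by
  rcases not_not.1 fun h => hcdm ⟨hcd, h⟩ with ⟨hab, hca, hdb⟩ | ⟨rfl, hcda⟩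
  · exact ⟨hca.1, hdb.2, fun h => absurd h hab⟩
  · obtain ⟨rfl, rfl⟩ := Prod.mk.inj hcda
    exact ⟨rle_refl _, rle_refl _, fun _ => ⟨rfl, rfl⟩⟩

lemma pji_subset_tint (he : TransRel e) (hF : Ftriple e a b U) {x : Set (E × E)}
    (hxp : x ⊆ pji e a b U) {z : E × E} (hz : z ∈ tint e x) (hzm : z ∉ pminus e a b U) :
    pji e a b U ⊆ tint e x := by
  obtain ⟨c, d⟩ := z
  obtain ⟨hca, hbd, hdeg⟩ := rle_ends_of_notMem_pminus (hxp (tint_subset x hz)) hzm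
  set K := e \ tint e x
  have hK : TransRel K := (isOpenIn_tint he x).2
  have hcK : (c, d) ∉ K := fun h => h.2 hz
  have hsource : ∀ s, s = a ∨ s ∈ cce e a b \ U → c = s ∨ (c, s) ∈ K := by
    refine fun s hs => or_iff_not_imp_left.2 fun hcs =>
      ⟨(hca.trans he (rle_of_source hs)).mem_of_ne hcs, fun hcsx => ?_⟩
    obtain ⟨rfl, rfl⟩ :=
      hF.eq_of_source_of_target hs (mem_pji.1 (hxp (tint_subset x hcsx))).2.2
    exact hcs (hdeg rfl).1
  have htarget : ∀ t, t = b ∨ t ∈ U → t = d ∨ (t, d) ∈ K := by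
    refine fun t ht => or_iff_not_imp_left.2 fun htd =>
      ⟨((rle_of_target hF.2.1 ht).trans he hbd).mem_of_ne htd, fun htdx => ?_⟩
    obtain ⟨rfl, rfl⟩ :=
      hF.eq_of_source_of_target (mem_pji.1 (hxp (tint_subset x htdx))).2.1 ht
    exact htd (hdeg rfl).2.symm
  rintro ⟨s, t⟩ ⟨hst, hs, ht⟩
  by_contra hstx
  have hstK : (s, t) ∈ K := ⟨hst, hstx⟩
  rcases hsource s hs with rfl | hcs <;> rcases htarget t ht with rfl | htd
  exacts [hcK hstK, hcK (hK _ _ _ hstK htd), hcK (hK _ _ _ hcs hstK),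
    hcK (hK _ _ _ (hK _ _ _ hcs hstK) htd)]

end Pji

def CompletelyJoinIrreducibleIn (e p : Set (E × E)) : Prop :=
  ∃ p', RegClosed e p' ∧ p' ⊂ p ∧ ∀ x, RegClosed e x → x ⊂ p → x ⊆ p'

lemma exists_eq_pji_of_completelyJoinIrreducibleIn (he : TransRel e) {p : Set (E × E)}
    (hp : RegClosed e p) (hcji : CompletelyJoinIrreducibleIn e p) :
    ∃ (a b : E) (U : Set E), Ftriple e a b U ∧ p = pji e a b U := by
  by_contra hne
  push Not at hne
  obtain ⟨p', hp', hlt, hmax⟩ := hcji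
  refine hlt.not_subset (hp.subset_of_tint_subset hp'.transRel ?_)
  rintro ⟨a, b⟩ hab
  obtain ⟨U, hF, hsub⟩ := exists_pji_subset_of_mem (isOpenIn_tint he p) hab
  have hlt : pji e a b U ⊂ p :=
    ssubset_of_subset_of_ne (hsub.trans (tint_subset p)) (hne a b U hF).symm
  exact hmax _ (hF.isClopenIn_pji he).regClosed hlt (mem_pji_self hF.1)

lemma completelyJoinIrreducibleIn_pji (he : TransRel e) {a b : E} {U : Set E}
    (hF : Ftriple e a b U) : CompletelyJoinIrreducibleIn e (pji e a b U) := by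
  refine ⟨_, regClosed_tcl_tint he (pminus e a b U), ?_, fun x hx hxp => ?_⟩
  · refine (tcl_subset_of_transRel ((tint_subset _).trans (Set.sep_subset _ _))
      (hF.isClopenIn_pji he).2.1).ssubset_of_not_superset fun h => ?_
    exact notMem_tcl_pminus hF (tcl_mono (tint_subset _) (h (mem_pji_self hF.1)))
  by_cases h : tint e x ⊆ pminus e a b U
  · exact hx.subset_of_tint_subset (transRel_tcl_s3 _)
      (((isOpenIn_tint he x).subset_tint h).trans (subset_tcl_s3 _))
  · obtain ⟨z, hz, hzm⟩ := Set.not_subset.1 h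
    exact absurd ((pji_subset_tint he hF hxp.subset hz hzm).trans (tint_subset x))
      hxp.not_subset

end

/-- a regular closed subset `p` of `e` is completely join-irreducible in
`Reg(e)` iff `p = ⟨a,b,U⟩` for some `(a,b,U) ∈ F(e)`. -/
theorem completelyJoinIrreducible_iff_pji {E : Type*} (e : Set (E × E)) (he : TransRel e)
    (p : Set (E × E)) (hp : RegClosed e p) :
    (∃ p', RegClosed e p' ∧ p' ⊂ p ∧ ∀ x, RegClosed e x → x ⊂ p → x ⊆ p') ↔
      ∃ (a b : E) (U : Set E), Ftriple e a b U ∧ p = pji e a b U := by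
  refine ⟨exists_eq_pji_of_completelyJoinIrreducibleIn he hp, ?_⟩
  rintro ⟨a, b, U, hF, rfl⟩
  exact completelyJoinIrreducibleIn_pji he hF
end
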